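/- arXiv:2312.14835 — 5 statements merged into one kernel-verified Lean document; each statement's English description precedes it below -/
import Mathlib

section
/- Let k ≥ 2 be an integer and let Γ be a finite connected k-GNDB graph (so there exists a positive integer γ such that for every edge ab of Γ, the pair {|W_{ab}|, |W_{ba}|} equals {γ, kγ}). Then Γ is bipartite. -/
/-!
The transmission `T v = ∑ₓ d(x, v)` changes along an edge `ab` by exactly `|W_ba| - |W_ab|`,
because the distances from any vertex to `a` and to `b` differ by at most one. In a `k`-GNDB graph
this difference is `±(k - 1)γ` on every edge, so `v ↦ ⌊T v / ((k - 1)γ)⌋ mod 2` is a proper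
2-colouring.
-/

/-- The set of vertices closer to `a` than to `b`. -/
def closerSet {V : Type*} (G : SimpleGraph V) (a b : V) : Set V :=
  {x | G.dist x a < G.dist x b}

namespace SimpleGraph

variable {V : Type*} (G : SimpleGraph V)

noncomputable def transmission [Fintype V] (v : V) : ℕ :=
  ∑ x, G.dist x v

variable {G}

theorem colorable_two_of_adj_eq_add {f : V → ℕ} {d : ℕ} (hd : 0 < d)
    (hf : ∀ a b, G.Adj a b → f a = f b + d ∨ f b = f a + d) : G.Colorable 2 := by
  have hstep : ∀ m n : ℕ, m = n + d → ((m / d : ℕ) : ZMod 2) ≠ ((n / d : ℕ) : ZMod 2) := by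
    rintro m n rfl
    simp [Nat.add_div_right n hd]
  let c : G.Coloring (ZMod 2) :=
    Coloring.mk (fun v => ((f v / d : ℕ) : ZMod 2)) fun {a b} hab => by
      rcases hf a b hab with h | h
      · exact hstep _ _ h
      · exact (hstep _ _ h).symm
  simpa using c.colorable

theorem Connected.dist_le_dist_add_one_of_adj (hconn : G.Connected) {a b : V} (hab : G.Adj a b)
    (x : V) : G.dist x a ≤ G.dist x b + 1 := by
  have := hconn.dist_triangle (u := x) (v := b) (w := a)
  rwa [dist_eq_one_iff_adj.mpr hab.symm] at this

theorem ncard_closerSet_eq_sum [Fintype V] (a b : V) :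
    (closerSet G a b).ncard = ∑ x, if G.dist x a < G.dist x b then 1 else 0 := by
  classical
  rw [← Finset.card_filter, closerSet, Set.ncard_eq_toFinset_card']
  congr 1
  ext x
  simp

theorem Connected.transmission_add_ncard_closerSet [Fintype V] (hconn : G.Connected) {a b : V}
    (hab : G.Adj a b) :
    G.transmission a + (closerSet G a b).ncard = G.transmission b + (closerSet G b a).ncard := by
  simp only [transmission, ncard_closerSet_eq_sum, ← Finset.sum_add_distrib]
  refine Finset.sum_congr rfl fun x _ => ?_
  have hab' := hconn.dist_le_dist_add_one_of_adj hab x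
  have hba' := hconn.dist_le_dist_add_one_of_adj hab.symm x
  split_ifs <;> omega

end SimpleGraph

open SimpleGraph in
/-- Let `k ≥ 2` be an integer and let `Γ` be a finite connected `k`-GNDB graph (so there
exists a positive integer `γ` such that for every edge `ab`, the pair
`{|W_{ab}|, |W_{ba}|}` equals `{γ, kγ}`). Then `Γ` is bipartite. -/
theorem stmt_0 {V : Type*} [Fintype V] (G : SimpleGraph V) (hconn : G.Connected)
    (k : ℕ) (hk : 2 ≤ k) (γ : ℕ) (hγ : 0 < γ)
    (hGNDB : ∀ a b : V, G.Adj a b →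
      ({(closerSet G a b).ncard, (closerSet G b a).ncard} : Set ℕ) = {γ, k * γ}) :
    G.Colorable 2 := by
  have hkγ : γ + γ ≤ k * γ := by nlinarith
  refine colorable_two_of_adj_eq_add (f := G.transmission) (d := k * γ - γ) (by omega)
    fun a b hab => ?_
  have hT := hconn.transmission_add_ncard_closerSet hab
  rcases Set.pair_eq_pair_iff.mp (hGNDB a b hab) with ⟨hWab, hWba⟩ | ⟨hWab, hWba⟩
  · left; omega
  · right; omega
end

section
/- Let Γ be a finite connected 3-GNDB graph of diameter 2, and let ab be an edge of Γ with |W_{ab}| = 3|W_{ba}|. Then deg(a) = 3·deg(b). -/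
/-!
In diameter two, for an edge `ab` the set `W_{ab}` is `a` together with the neighbours of `a`
other than `b` that are not adjacent to `b`, so `|W_{ab}| = deg a - c` with `c` the number of
common neighbours of `a` and `b`. Hence `|W_{ab}| - |W_{ba}| = deg a - deg b`, and the 3-GNDB
condition makes this `±2γ` on every edge. Summing around a triangle gives `0` as a sum of three
terms `±2γ`, impossible; so `Γ` is triangle-free, `c = 0`, and `deg a = |W_{ab}|`,
`deg b = |W_{ba}|`.
-/

namespace SimpleGraph

variable {V : Type*} (G : SimpleGraph V) {a b : V}

lemma reachable_of_ediam_le_two (hdiam : G.ediam ≤ 2) (x y : V) : G.Reachable x y :=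
  reachable_of_edist_ne_top <| ne_top_of_le_ne_top (by decide) (edist_le_ediam.trans hdiam)

lemma dist_le_two_of_ediam_le_two (hdiam : G.ediam ≤ 2) (x y : V) : G.dist x y ≤ 2 := by
  have h := (G.reachable_of_ediam_le_two hdiam x y).coe_dist_eq_edist ▸ edist_le_ediam.trans hdiam
  exact_mod_cast h

lemma ediam_le_two_of_diam_eq_two (hdiam : G.diam = 2) : G.ediam ≤ 2 := by
  have h := G.ediam_ne_top_of_diam_ne_zero (by omega)
  rw [diam, ← ENat.natCast_inj, ENat.natCast_toNat h] at hdiam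
  exact hdiam.le

lemma disjoint_closerSet_commonNeighbors (a b : V) :
    Disjoint (closerSet G a b) (G.commonNeighbors a b) := by
  refine Set.disjoint_left.mpr fun x (hx : G.dist x a < G.dist x b) hcommon => ?_
  rw [mem_commonNeighbors] at hcommon
  rw [dist_eq_one_iff_adj.mpr hcommon.1.symm, dist_eq_one_iff_adj.mpr hcommon.2.symm] at hx
  exact lt_irrefl 1 hx

lemma closerSet_union_commonNeighbors (hdiam : G.ediam ≤ 2) (hab : G.Adj a b) :
    closerSet G a b ∪ G.commonNeighbors a b = insert a (G.neighborSet a \ {b}) := by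
  ext x
  simp only [closerSet, Set.mem_union, Set.mem_ofPred_eq, mem_commonNeighbors, Set.mem_insert_iff,
    Set.mem_sdiff, mem_neighborSet, Set.mem_singleton_iff]
  have hreach := G.reachable_of_ediam_le_two hdiam x
  constructor
  · rintro (hx | ⟨hax, hbx⟩)
    · have hxb := G.dist_le_two_of_ediam_le_two hdiam x b
      rcases Nat.lt_or_ge (G.dist x a) 1 with h | h
      · exact .inl ((hreach a).dist_eq_zero_iff.mp (by omega))
      · refine .inr ⟨(dist_eq_one_iff_adj.mp (by omega)).symm, ?_⟩
        rintro rfl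
        simp at hx
    · exact .inr ⟨hax, fun hxb => G.ne_of_adj hbx hxb.symm⟩
  · rintro (rfl | ⟨hax, hxb⟩)
    · left
      rw [dist_self, dist_eq_one_iff_adj.mpr hab]
      exact one_pos
    · by_cases hbx : G.Adj b x
      · exact .inr ⟨hax, hbx⟩
      · left
        rw [dist_eq_one_iff_adj.mpr hax.symm]
        exact (hreach b).one_lt_dist_of_ne_of_not_adj hxb (fun h => hbx h.symm)

lemma ncard_closerSet_add_ncard_commonNeighbors [Fintype V] [DecidableRel G.Adj]
    (hdiam : G.ediam ≤ 2) (hab : G.Adj a b) :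
    (closerSet G a b).ncard + (G.commonNeighbors a b).ncard = G.degree a := by
  rw [← Set.ncard_union_eq (G.disjoint_closerSet_commonNeighbors a b),
    G.closerSet_union_commonNeighbors hdiam hab,
    Set.ncard_insert_of_notMem (fun h => G.irrefl h.1),
    Set.ncard_sdiff_singleton_of_mem (show b ∈ G.neighborSet a from hab),
    ← Nat.card_coe_set_eq, Nat.card_eq_fintype_card, card_neighborSet_eq_degree]
  have := G.degree_pos_iff_exists_adj a |>.mpr ⟨b, hab⟩
  omega

lemma commonNeighbors_eq_empty_of_forall_adj_degree_sub [Fintype V] [DecidableRel G.Adj]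
    {d : ℤ} (hd : d ≠ 0)
    (hgap : ∀ u v, G.Adj u v →
      (G.degree u : ℤ) - G.degree v = d ∨ (G.degree u : ℤ) - G.degree v = -d)
    (hab : G.Adj a b) : G.commonNeighbors a b = ∅ := by
  refine Set.eq_empty_of_forall_notMem fun c hc => ?_
  rw [mem_commonNeighbors] at hc
  have := hgap a b hab
  have := hgap b c hc.2
  have := hgap c a hc.1.symm
  omega

end SimpleGraph

theorem stmt_1_general {V : Type*} [Fintype V] (G : SimpleGraph V) [DecidableRel G.Adj]
    (hGNDB : ∃ γ : ℕ, 0 < γ ∧ ∀ a b : V, G.Adj a b →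
      ({(closerSet G a b).ncard, (closerSet G b a).ncard} : Set ℕ) = {γ, 3 * γ})
    (hdiam : G.diam = 2)
    (a b : V) (hab : G.Adj a b)
    (hW : (closerSet G a b).ncard = 3 * (closerSet G b a).ncard) :
    G.degree a = 3 * G.degree b := by
  obtain ⟨γ, hγ, hG⟩ := hGNDB
  have hediam := G.ediam_le_two_of_diam_eq_two hdiam
  have hgap : ∀ u v, G.Adj u v → (G.degree u : ℤ) - G.degree v = 2 * γ ∨
      (G.degree u : ℤ) - G.degree v = -(2 * γ) := by
    intro u v huv
    have hu := G.ncard_closerSet_add_ncard_commonNeighbors hediam huv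
    have hv := G.ncard_closerSet_add_ncard_commonNeighbors hediam huv.symm
    rw [G.commonNeighbors_symm] at hv
    rcases Set.pair_eq_pair_iff.mp (hG u v huv) with ⟨h₁, h₂⟩ | ⟨h₁, h₂⟩ <;> omega
  have hno := G.commonNeighbors_eq_empty_of_forall_adj_degree_sub (by omega) hgap hab
  have ha := G.ncard_closerSet_add_ncard_commonNeighbors hediam hab
  have hb := G.ncard_closerSet_add_ncard_commonNeighbors hediam hab.symm
  rw [hno, Set.ncard_empty] at ha
  rw [G.commonNeighbors_symm, hno, Set.ncard_empty] at hb
  omega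

/-- Let `Γ` be a finite connected 3-GNDB graph of diameter 2, and let `ab` be an edge
with `|W_{ab}| = 3|W_{ba}|`. Then `deg(a) = 3 deg(b)`. -/
theorem stmt_1 {V : Type*} [Fintype V] (G : SimpleGraph V) [DecidableRel G.Adj]
    (hconn : G.Connected)
    (hGNDB : ∃ γ : ℕ, 0 < γ ∧ ∀ a b : V, G.Adj a b →
      ({(closerSet G a b).ncard, (closerSet G b a).ncard} : Set ℕ) = {γ, 3 * γ})
    (hdiam : G.diam = 2)
    (a b : V) (hab : G.Adj a b)
    (hW : (closerSet G a b).ncard = 3 * (closerSet G b a).ncard) :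
    G.degree a = 3 * G.degree b :=
  stmt_1_general G hGNDB hdiam a b hab hW
end

section
/- Let k ≥ 1 be an integer and let Γ be a finite connected k-GNDB graph with parameter γ and diameter d. Then d ≤ k·γ. -/
namespace SimpleGraph

variable {V : Type*} {G : SimpleGraph V}

lemma Walk.dist_add_dist_le_length {a u x : V} (p : G.Walk a u) (hx : x ∈ p.support) :
    G.dist a x + G.dist x u ≤ p.length := by
  classical
  calc G.dist a x + G.dist x u
      ≤ (p.takeUntil x hx).length + (p.dropUntil x hx).length :=
        add_le_add (dist_le _) (dist_le _)
    _ = p.length := by rw [← Walk.length_append, Walk.take_spec]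

lemma Walk.support_subset_closerSet (hconn : G.Connected) {a u v : V} (p : G.Walk a u)
    (hp : p.length < G.dist u v) : {x | x ∈ p.support} ⊆ closerSet G a v := by
  intro x hx
  have hsplit := p.dist_add_dist_le_length hx
  have htri : G.dist u v ≤ G.dist u x + G.dist x v := hconn.dist_triangle
  have hux : G.dist u x = G.dist x u := dist_comm
  have hax : G.dist a x = G.dist x a := dist_comm
  show G.dist x a < G.dist x v
  omega

lemma Connected.exists_adj_dist_le_ncard_closerSet [Finite V] (hconn : G.Connected)
    {u v : V} (huv : u ≠ v) : ∃ a, G.Adj a v ∧ G.dist u v ≤ (closerSet G a v).ncard := by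
  classical
  obtain ⟨q, hq_path, hq_len⟩ := hconn.exists_path_of_dist v u
  cases q with
  | nil => exact absurd rfl huv
  | @cons _ a _ hva p =>
    refine ⟨a, hva.symm, ?_⟩
    rw [Walk.length_cons, dist_comm] at hq_len
    have hp_path : p.IsPath := hq_path.of_cons
    calc G.dist u v
        = p.support.toFinset.card := by
          rw [List.toFinset_card_of_nodup hp_path.support_nodup, Walk.length_support, hq_len]
      _ = {x | x ∈ p.support}.ncard := by
          rw [← Set.ncard_coe_finset]; congr 1; ext; simp
      _ ≤ (closerSet G a v).ncard :=
          Set.ncard_le_ncard (p.support_subset_closerSet hconn (by omega))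

end SimpleGraph

theorem stmt_3_general {V : Type*} [Fintype V] (G : SimpleGraph V) (hconn : G.Connected)
    (k : ℕ) (hk : 1 ≤ k) (γ : ℕ)
    (hGNDB : ∀ a b : V, G.Adj a b →
      ({(closerSet G a b).ncard, (closerSet G b a).ncard} : Set ℕ) = {γ, k * γ}) :
    G.diam ≤ k * γ := by
  have : Nonempty V := hconn.nonempty
  obtain ⟨u, v, huv⟩ := G.exists_dist_eq_diam
  rw [← huv]
  rcases eq_or_ne u v with rfl | hne
  · simp
  obtain ⟨a, hav, hdist⟩ := hconn.exists_adj_dist_le_ncard_closerSet hne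
  have hmem : (closerSet G a v).ncard ∈ ({γ, k * γ} : Set ℕ) := by
    rw [← hGNDB a v hav]; exact Set.mem_insert _ _
  have hγ_le : γ ≤ k * γ := Nat.le_mul_of_pos_left γ hk
  simp only [Set.mem_insert_iff, Set.mem_singleton_iff] at hmem
  omega

/-- Let `k ≥ 1` and let `Γ` be a finite connected `k`-GNDB graph with parameter `γ` and
diameter `d`. Then `d ≤ k·γ`. -/
theorem stmt_3 {V : Type*} [Fintype V] (G : SimpleGraph V) (hconn : G.Connected)
    (k : ℕ) (hk : 1 ≤ k) (γ : ℕ) (hγ : 0 < γ)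
    (hGNDB : ∀ a b : V, G.Adj a b →
      ({(closerSet G a b).ncard, (closerSet G b a).ncard} : Set ℕ) = {γ, k * γ}) :
    G.diam ≤ k * γ :=
  stmt_3_general G hconn k hk γ hGNDB
end

section
/- A finite connected graph Γ with at least one edge is 3-GNDB with parameter γ = 2 if and only if Γ is isomorphic to the complete bipartite graph K_{2,6}. -/
set_option linter.unusedSectionVars false
namespace K26Aux

open SimpleGraph Finset

variable {V : Type*} [Fintype V] {G : SimpleGraph V}

private lemma dist_le_adj (hconn : G.Connected) {a b : V} (h : G.Adj a b) (x : V) :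
    G.dist x b ≤ G.dist x a + 1 := by
  have h1 : G.dist a b = 1 := SimpleGraph.dist_eq_one_iff_adj.mpr h
  have h2 := hconn.dist_triangle (u := x) (v := a) (w := b)
  omega

private lemma closer_eq_filter (a b : V) :
    haveI := Classical.dec
    closerSet G a b = ↑(univ.filter fun x => G.dist x a < G.dist x b) := by
  classical
  ext x; simp [closerSet]

private lemma sum_dist_sub (hconn : G.Connected) {a b : V} (h : G.Adj a b) :
    (∑ x : V, (G.dist x a : ℤ)) - ∑ x : V, (G.dist x b : ℤ) =
      ((closerSet G b a).ncard : ℤ) - (closerSet G a b).ncard := by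
  classical
  have key : ∀ x : V, (G.dist x a : ℤ) - G.dist x b =
      (if G.dist x b < G.dist x a then (1 : ℤ) else 0)
        - (if G.dist x a < G.dist x b then (1 : ℤ) else 0) := by
    intro x
    have h1 := dist_le_adj hconn h x
    have h2 := dist_le_adj hconn h.symm x
    split_ifs with h3 h4 h4 <;> push_cast <;> omega
  have e1 : closerSet G b a = ↑(univ.filter fun x => G.dist x b < G.dist x a) := by
    ext x; simp [closerSet]
  have e2 : closerSet G a b = ↑(univ.filter fun x => G.dist x a < G.dist x b) := by
    ext x; simp [closerSet]
  rw [e1, e2, Set.ncard_coe_finset, Set.ncard_coe_finset, ← Finset.sum_sub_distrib]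
  rw [Finset.sum_congr rfl (fun x _ => key x), Finset.sum_sub_distrib]
  simp [Finset.sum_boole]

private lemma pair_extract {m n : ℕ} (h : ({m, n} : Set ℕ) = {2, 6}) :
    (m = 2 ∧ n = 6) ∨ (m = 6 ∧ n = 2) := by
  have h2 : (2 : ℕ) ∈ ({m, n} : Set ℕ) := by rw [h]; left; rfl
  have h6 : (6 : ℕ) ∈ ({m, n} : Set ℕ) := by rw [h]; right; rfl
  simp only [Set.mem_insert_iff, Set.mem_singleton_iff] at h2 h6
  omega

private noncomputable def FF (G : SimpleGraph V) (v : V) : ZMod 8 :=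
  ((∑ x : V, G.dist x v : ℕ) : ZMod 8)

private lemma F_adj (hconn : G.Connected)
    (hH : ∀ a b : V, G.Adj a b →
      ({(closerSet G a b).ncard, (closerSet G b a).ncard} : Set ℕ) = {2, 6})
    {a b : V} (h : G.Adj a b) : FF G a = FF G b + 4 := by
  have hs := sum_dist_sub hconn h
  have hcast : ∀ v : V, ((((∑ x : V, G.dist x v : ℕ) : ℤ)) : ZMod 8) = FF G v := by
    intro v; unfold FF; push_cast; ring
  have hz : ((((∑ x : V, (G.dist x a : ℤ)) : ℤ)) : ZMod 8)
      = (((∑ x : V, (G.dist x b : ℤ)) : ℤ) : ZMod 8) + ((((closerSet G b a).ncard : ℤ) - (closerSet G a b).ncard : ℤ) : ZMod 8) := by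
    rw [← hs]; push_cast; ring
  have hFa : ((((∑ x : V, (G.dist x a : ℤ)) : ℤ)) : ZMod 8) = FF G a := by
    rw [← hcast a]; push_cast; ring
  have hFb : ((((∑ x : V, (G.dist x b : ℤ)) : ℤ)) : ZMod 8) = FF G b := by
    rw [← hcast b]; push_cast; ring
  rw [hFa, hFb] at hz
  rcases pair_extract (hH a b h) with ⟨h1, h2⟩ | ⟨h1, h2⟩ <;> rw [h1, h2] at hz <;>
      rw [hz] <;> push_cast <;> ring_nf <;> rfl
private lemma F_walk (hconn : G.Connected)
    (hH : ∀ a b : V, G.Adj a b →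
      ({(closerSet G a b).ncard, (closerSet G b a).ncard} : Set ℕ) = {2, 6})
    {u v : V} (w : G.Walk u v) : FF G u = FF G v + 4 * w.length := by
  induction w with
  | nil => simp
  | cons h t ih =>
    rw [SimpleGraph.Walk.length_cons, F_adj hconn hH h, ih]
    push_cast
    ring

private lemma no_equi (hconn : G.Connected)
    (hH : ∀ a b : V, G.Adj a b →
      ({(closerSet G a b).ncard, (closerSet G b a).ncard} : Set ℕ) = {2, 6})
    {a b : V} (h : G.Adj a b) (x : V) : G.dist x a ≠ G.dist x b := by
  intro heq
  obtain ⟨p, hp⟩ := hconn.exists_walk_length_eq_dist x a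
  obtain ⟨q, hq⟩ := hconn.exists_walk_length_eq_dist x b
  have h1 := F_walk hconn hH p
  have h2 := F_walk hconn hH q
  have h3 := F_adj hconn hH h
  rw [hp, heq] at h1
  rw [hq] at h2
  have h4 : FF G a = FF G b := by
    have := h1.symm.trans h2
    exact add_right_cancel this
  rw [h4] at h3
  have h5 : (0 : ZMod 8) = 4 := by
    have := h3
    nth_rewrite 1 [show FF G b = FF G b + 0 by ring] at this
    exact add_left_cancel this
  exact absurd h5 (by decide)

private lemma card8 (hconn : G.Connected)
    (hH : ∀ a b : V, G.Adj a b →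
      ({(closerSet G a b).ncard, (closerSet G b a).ncard} : Set ℕ) = {2, 6})
    {a b : V} (h : G.Adj a b) : Fintype.card V = 8 := by
  have hsub : (Set.univ : Set V) = closerSet G a b ∪ closerSet G b a := by
    ext x
    simp only [Set.mem_univ, true_iff, Set.mem_union, closerSet, Set.mem_setOf_eq]
    have := no_equi hconn hH h x
    omega
  have hdisj : Disjoint (closerSet G a b) (closerSet G b a) := by
    rw [Set.disjoint_left]
    intro x h1 h2
    simp only [closerSet, Set.mem_setOf_eq] at h1 h2
    omega
  have hu := Set.ncard_union_eq hdisj (Set.toFinite _) (Set.toFinite _)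
  rw [← Nat.card_eq_fintype_card, ← Set.ncard_univ, hsub, hu]
  rcases pair_extract (hH a b h) with ⟨h1, h2⟩ | ⟨h1, h2⟩ <;> rw [h1, h2]

private lemma exists_penultimate (hconn : G.Connected) {u v : V} (hne : G.dist u v ≠ 0) :
    ∃ y, G.Adj y v ∧ G.dist u y + 1 = G.dist u v := by
  have huv : u ≠ v := by
    intro h; rw [h] at hne; exact hne (SimpleGraph.dist_self)
  obtain ⟨w, hw⟩ := hconn.exists_walk_length_eq_dist u v
  obtain ⟨z, hadj, q, hq⟩ := w.reverse.exists_eq_cons_of_ne (Ne.symm huv)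
  have hlen : q.length + 1 = G.dist u v := by
    have : w.reverse.length = w.length := SimpleGraph.Walk.length_reverse w
    rw [hq] at this
    simp only [SimpleGraph.Walk.length_cons] at this
    omega
  refine ⟨z, hadj.symm, ?_⟩
  have h1 : G.dist u z ≤ q.length := by
    have := SimpleGraph.dist_le q.reverse
    simpa using this
  have h2 : G.dist u v ≤ G.dist u z + 1 := by
    have hz : G.dist z v = 1 := SimpleGraph.dist_eq_one_iff_adj.mpr hadj.symm
    have := hconn.dist_triangle (u := u) (v := z) (w := v)
    omega
  omega

private lemma pair_lemma (hconn : G.Connected)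
    (hH : ∀ a b : V, G.Adj a b →
      ({(closerSet G a b).ncard, (closerSet G b a).ncard} : Set ℕ) = {2, 6})
    {a b : V} (h : G.Adj a b) (h2 : (closerSet G b a).ncard = 2) :
    ∃ c, c ≠ b ∧ G.Adj c b ∧ G.dist c a = 2 ∧ closerSet G b a = {b, c} := by
  have hba : G.dist b a = 1 := SimpleGraph.dist_eq_one_iff_adj.mpr h.symm
  have hb : b ∈ closerSet G b a := by
    simp [closerSet, hba, SimpleGraph.dist_self]
  obtain ⟨x, y, hxy, hs⟩ := Set.ncard_eq_two.mp h2
  obtain ⟨c, hcne, hset⟩ : ∃ c, c ≠ b ∧ closerSet G b a = {b, c} := by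
    rw [hs] at hb
    rcases hb with rfl | rfl
    · exact ⟨y, hxy.symm, by rw [hs]⟩
    · exact ⟨x, hxy, by rw [hs, Set.pair_comm]⟩
  have hcmem : c ∈ closerSet G b a := by rw [hset]; right; rfl
  have hclt : G.dist c b < G.dist c a := hcmem
  have hc0 : G.dist c b ≠ 0 := by
    intro h0
    exact hcne (hconn.dist_eq_zero_iff.mp h0)
  have hcb1 : G.dist c b = 1 := by
    by_contra hne1
    obtain ⟨z, hzadj, hzd⟩ := exists_penultimate hconn hc0
    have hzb : G.dist z b = 1 := SimpleGraph.dist_eq_one_iff_adj.mpr hzadj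
    have hza : 2 ≤ G.dist z a := by
      have := hconn.dist_triangle (u := c) (v := z) (w := a)
      omega
    have hzmem : z ∈ closerSet G b a := by
      simp only [closerSet, Set.mem_setOf_eq]
      omega
    rw [hset] at hzmem
    rcases hzmem with rfl | rfl
    · exact G.irrefl hzadj
    · omega
  refine ⟨c, hcne, SimpleGraph.dist_eq_one_iff_adj.mp hcb1, ?_, hset⟩
  have := hconn.dist_triangle (u := c) (v := b) (w := a)
  omega
private lemma forward (hconn : G.Connected) (hedge : ∃ a b : V, G.Adj a b)
    (hH : ∀ a b : V, G.Adj a b →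
      ({(closerSet G a b).ncard, (closerSet G b a).ncard} : Set ℕ) = {2, 6}) :
    Nonempty (G ≃g completeBipartiteGraph (Fin 2) (Fin 6)) := by
  classical
  obtain ⟨a0, b0, hab0⟩ := hedge
  -- choose a minimizing total distance
  obtain ⟨a, -, hmin⟩ := Finset.exists_min_image Finset.univ
    (fun v => ∑ x : V, G.dist x v) ⟨a0, Finset.mem_univ a0⟩
  -- a is the "big" side of each of its edges
  have hsmall : ∀ v, G.Adj a v →
      (closerSet G v a).ncard = 2 ∧ (closerSet G a v).ncard = 6 := by
    intro v hv
    have hs := sum_dist_sub hconn hv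
    rcases pair_extract (hH a v hv) with ⟨h1, h2⟩ | ⟨h1, h2⟩
    · exfalso
      have hm := hmin v (Finset.mem_univ v)
      have hm' : ((∑ x : V, G.dist x a : ℕ) : ℤ) ≤ ((∑ x : V, G.dist x v : ℕ) : ℤ) := by
        exact_mod_cast hm
      push_cast at hm'
      rw [h1, h2] at hs
      omega
    · exact ⟨h2, h1⟩
  -- the "pair" function
  have hex : ∀ v, G.Adj a v →
      ∃ c, c ≠ v ∧ G.Adj c v ∧ G.dist c a = 2 ∧ closerSet G v a = {v, c} :=
    fun v hv => pair_lemma hconn hH hv (hsmall v hv).1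
  choose! p hpne hpadj hpdist hpset using hex
  -- basic distance facts
  have hdista : ∀ v, G.Adj a v → G.dist v a = 1 :=
    fun v hv => SimpleGraph.dist_eq_one_iff_adj.mpr hv.symm
  have hnadj_ap : ∀ v, G.Adj a v → ¬ G.Adj a (p v) := by
    intro v hv hadj
    have : G.dist (p v) a = 1 := SimpleGraph.dist_eq_one_iff_adj.mpr hadj.symm
    rw [hpdist v hv] at this
    omega
  -- neighbor classification
  have hN : ∀ v u, G.Adj a v → G.Adj u v → u = a ∨ u = p v := by
    intro v u hv hu
    by_cases hua : u = a
    · exact Or.inl hua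
    right
    have h1 : G.dist u v = 1 := SimpleGraph.dist_eq_one_iff_adj.mpr hu
    have h2 : G.dist u a ≠ 1 := by
      have := no_equi hconn hH hv u
      omega
    have h0 : G.dist u a ≠ 0 := fun h0 => hua (hconn.dist_eq_zero_iff.mp h0)
    have hmem : u ∈ closerSet G v a := by
      simp only [closerSet, Set.mem_setOf_eq]
      omega
    rw [hpset v hv] at hmem
    rcases hmem with rfl | rfl
    · exact absurd hu (G.irrefl)
    · rfl
  -- classification of distance-2 vertices
  have hd2 : ∀ x, G.dist x a = 2 → ∃ v, G.Adj a v ∧ x = p v := by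
    intro x hx
    have hax : G.dist a x ≠ 0 := by rw [SimpleGraph.dist_comm]; omega
    obtain ⟨y, hyx, hyd⟩ := exists_penultimate hconn hax
    have hay' : G.dist a x = 2 := by rw [SimpleGraph.dist_comm]; omega
    have hay : G.Adj a y := SimpleGraph.dist_eq_one_iff_adj.mp (by omega)
    rcases hN y x hay hyx.symm with rfl | rfl
    · rw [SimpleGraph.dist_self] at hx; omega
    · exact ⟨y, hay, rfl⟩
  -- all vertices are within distance 2 of a
  have hle2 : ∀ x, G.dist x a ≤ 2 := by
    have key : ∀ n, ∀ x, G.dist x a = n → n ≤ 2 := by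
      intro n
      induction n using Nat.strong_induction_on with
      | _ n ih =>
        intro x hx
        by_contra hgt
        push_neg at hgt
        have hx0 : G.dist a x ≠ 0 := by rw [SimpleGraph.dist_comm]; omega
        obtain ⟨y, hyx, hyd⟩ := exists_penultimate hconn hx0
        rw [SimpleGraph.dist_comm (u := a) (v := x)] at hyd
        have h1 : G.dist y a = n - 1 := by rw [SimpleGraph.dist_comm]; omega
        have h2 := ih (n - 1) (by omega) y h1
        have hn3 : n = 3 := by omega
        have h3 : G.dist y a = 2 := by omega
        obtain ⟨v, hv, rfl⟩ := hd2 y h3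
        have t1 : G.dist x (p v) = 1 := SimpleGraph.dist_eq_one_iff_adj.mpr hyx.symm
        have t2 : G.dist (p v) v = 1 := SimpleGraph.dist_eq_one_iff_adj.mpr (hpadj v hv)
        have h4 : G.dist x v ≤ 2 := by
          have := hconn.dist_triangle (u := x) (v := p v) (w := v)
          omega
        have h5 : x ∈ closerSet G v a := by
          simp only [closerSet, Set.mem_setOf_eq]
          omega
        rw [hpset v hv] at h5
        rcases h5 with rfl | rfl
        · have := hdista x hv; omega
        · have := hpdist v hv; omega
    intro x
    exact key _ x rfl
  -- no edges among distance-2 vertices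
  have hPind : ∀ u v, G.Adj a u → G.Adj a v → ¬ G.Adj (p u) (p v) := by
    intro u v hu hv hadj
    have h1 := no_equi hconn hH hadj a
    rw [SimpleGraph.dist_comm (u := a) (v := p u), SimpleGraph.dist_comm (u := a) (v := p v),
      hpdist u hu, hpdist v hv] at h1
    exact h1 rfl
  -- distance facts between pendants and pairs
  have hdist_uv : ∀ u v, G.Adj a u → G.Adj a v → u ≠ v → G.dist u v = 2 := by
    intro u v hu hv huv
    have h0 : G.dist u v ≠ 0 := fun h0 => huv (hconn.dist_eq_zero_iff.mp h0)
    have h1 : G.dist u v ≠ 1 := by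
      intro h1
      rcases hN v u hv (SimpleGraph.dist_eq_one_iff_adj.mp h1) with rfl | rfl
      · exact G.irrefl hu
      · exact hnadj_ap v hv hu
    have h2 : G.dist u v ≤ 2 := by
      have t1 := dist_le_adj hconn hv u
      have t2 := hdista u hu
      omega
    omega
  have hdist_u_pv : ∀ u v, G.Adj a u → G.Adj a v → p u ≠ p v → 2 ≤ G.dist u (p v) := by
    intro u v hu hv hne
    have h0 : G.dist u (p v) ≠ 0 := by
      intro h0
      have := hconn.dist_eq_zero_iff.mp h0
      rw [this] at hu
      exact hnadj_ap v hv hu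
    have h1 : G.dist u (p v) ≠ 1 := by
      intro h1
      have hadj : G.Adj (p v) u := (SimpleGraph.dist_eq_one_iff_adj.mp h1).symm
      rcases hN u (p v) hu hadj with h | h
      · have := hpdist v hv
        rw [h, SimpleGraph.dist_self] at this
        omega
      · exact hne h.symm
    omega
  -- distance between distinct pairs is at least 3
  have hdist_pp : ∀ u v, G.Adj a u → G.Adj a v → p u ≠ p v → 3 ≤ G.dist (p u) (p v) := by
    intro u v hu hv hne
    have h0 : G.dist (p u) (p v) ≠ 0 := fun h0 => hne (hconn.dist_eq_zero_iff.mp h0)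
    have h1 : G.dist (p u) (p v) ≠ 1 :=
      fun h1 => hPind u v hu hv (SimpleGraph.dist_eq_one_iff_adj.mp h1)
    have h2 : G.dist (p u) (p v) ≠ 2 := by
      intro h2
      obtain ⟨y, hyadj, hyd⟩ := exists_penultimate hconn (by omega : G.dist (p u) (p v) ≠ 0)
      -- y adjacent to p v, dist (p u) y = 1
      have hy1 : G.dist (p u) y = 1 := by omega
      have hadjy : G.Adj (p u) y := SimpleGraph.dist_eq_one_iff_adj.mp hy1
      -- classify y
      have hy2 := hle2 y
      interval_cases hy : G.dist y a
      · -- y = a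
        have hya : y = a := hconn.dist_eq_zero_iff.mp hy
        rw [hya] at hyadj
        exact hnadj_ap v hv hyadj
      · -- y is a pendant
        have hay : G.Adj a y := by
          have : G.Adj y a := SimpleGraph.dist_eq_one_iff_adj.mp hy
          exact this.symm
        rcases hN y (p v) hay hyadj.symm with h | h
        · have := hpdist v hv
          rw [h, SimpleGraph.dist_self] at this
          omega
        · -- p v = p y, and Adj (p u) y gives p u = p y
          rcases hN y (p u) hay hadjy with h' | h'
          · have := hpdist u hu
            rw [h', SimpleGraph.dist_self] at this
            omega
          · exact hne (h'.trans h.symm)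
      · -- y is a pair vertex
        obtain ⟨z, hz, rfl⟩ := hd2 y hy
        exact hPind u z hu hz hadjy
    omega
  -- a has a neighbor
  have hnbra : ∃ v, G.Adj a v := by
    by_cases h : a = a0
    · exact ⟨b0, h ▸ hab0⟩
    · have hne : G.dist a0 a ≠ 0 := by
        intro h0
        exact h ((hconn.dist_eq_zero_iff.mp h0).symm)
      obtain ⟨y, hy, -⟩ := exists_penultimate hconn hne
      exact ⟨y, hy.symm⟩
  obtain ⟨v0, hv0⟩ := hnbra
  -- characterization of the closer set of a pair vertex
  have hcount : ∀ v, G.Adj a v →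
      closerSet G (p v) v = {p v} ∪ {u | G.Adj a u ∧ p u = p v ∧ u ≠ v} := by
    intro v hv
    ext x
    simp only [closerSet, Set.mem_setOf_eq, Set.mem_union, Set.mem_singleton_iff]
    have hxa := hle2 x
    have hpv2 := hpdist v hv
    have hv1 := hdista v hv
    have hpvv : G.dist (p v) v = 1 := SimpleGraph.dist_eq_one_iff_adj.mpr (hpadj v hv)
    interval_cases hx : G.dist x a
    · -- x = a
      have hxa' : x = a := hconn.dist_eq_zero_iff.mp hx
      subst hxa'
      have d1 : G.dist x (p v) = 2 := by rw [SimpleGraph.dist_comm]; exact hpv2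
      have d2 : G.dist x v = 1 := by rw [SimpleGraph.dist_comm]; exact hv1
      constructor
      · intro h; omega
      · rintro (rfl | ⟨h1, -, -⟩)
        · omega
        · exact absurd h1 (G.irrefl)
    · -- x is a pendant
      have hax : G.Adj a x := (SimpleGraph.dist_eq_one_iff_adj.mp hx).symm
      have hxnepv : x ≠ p v := by
        intro h; rw [h] at hx; omega
      by_cases hxv : x = v
      · have d1 : G.dist x (p v) = 1 := by rw [hxv, SimpleGraph.dist_comm]; exact hpvv
        have d2 : G.dist x v = 0 := by rw [hxv]; exact SimpleGraph.dist_self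
        constructor
        · intro h; omega
        · rintro (h | ⟨-, -, h⟩)
          · exact absurd h hxnepv
          · exact absurd hxv h
      · have d2 : G.dist x v = 2 := hdist_uv x v hax hv hxv
        by_cases hpp : p x = p v
        · have d1 : G.dist x (p v) = 1 := by
            rw [← hpp]
            exact SimpleGraph.dist_eq_one_iff_adj.mpr (hpadj x hax).symm
          constructor
          · intro _; exact Or.inr ⟨hax, hpp, hxv⟩
          · intro _; omega
        · have d1 : 2 ≤ G.dist x (p v) := hdist_u_pv x v hax hv hpp
          constructor
          · intro h; omega
          · rintro (h | ⟨-, h, -⟩)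
            · exact absurd h hxnepv
            · exact absurd h hpp
    · -- x is a pair vertex
      obtain ⟨z, hz, rfl⟩ := hd2 x hx
      by_cases hpp : p z = p v
      · rw [hpp]
        have d2 : G.dist (p v) v = 1 := hpvv
        have d1 : G.dist (p v) (p v) = 0 := SimpleGraph.dist_self
        constructor
        · intro _; exact Or.inl rfl
        · intro _; omega
      · have d1 : 3 ≤ G.dist (p z) (p v) := hdist_pp z v hz hv hpp
        have hzv : z ≠ v := fun h => hpp (by rw [h])
        have d2 : G.dist (p z) v ≤ 3 := by
          have t1 : G.dist (p z) z = 1 := SimpleGraph.dist_eq_one_iff_adj.mpr (hpadj z hz)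
          have t2 : G.dist z v = 2 := hdist_uv z v hz hv hzv
          have := hconn.dist_triangle (u := p z) (v := z) (w := v)
          omega
        constructor
        · intro h; omega
        · rintro (h | ⟨h1, -, -⟩)
          · exact absurd h hpp
          · exact absurd h1 (hnadj_ap z hz)
  -- cardinality of the closer set of a pair vertex
  have hTcard : ∀ v, G.Adj a v →
      (closerSet G (p v) v).ncard
        = (univ.filter fun u => G.Adj a u ∧ p u = p v).card := by
    intro v hv
    have he : closerSet G (p v) v
        = ↑(insert (p v) (((univ.filter fun u => G.Adj a u ∧ p u = p v)).erase v)) := by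
      rw [hcount v hv]
      ext x
      simp only [Set.mem_union, Set.mem_singleton_iff, Set.mem_setOf_eq, Finset.coe_insert,
        Set.mem_insert_iff, Finset.coe_erase, Set.mem_diff, Finset.mem_coe, Finset.mem_filter,
        Finset.mem_univ, true_and]
      tauto
    rw [he, Set.ncard_coe_finset]
    have hpvnot : p v ∉ ((univ.filter fun u => G.Adj a u ∧ p u = p v)).erase v := by
      intro hmem
      have := Finset.mem_of_mem_erase hmem
      rw [Finset.mem_filter] at this
      exact hnadj_ap v hv this.2.1
    have hvmem : v ∈ (univ.filter fun u => G.Adj a u ∧ p u = p v) := by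
      rw [Finset.mem_filter]
      exact ⟨Finset.mem_univ v, hv, rfl⟩
    rw [Finset.card_insert_of_notMem hpvnot, Finset.card_erase_of_mem hvmem]
    have : 1 ≤ (univ.filter fun u => G.Adj a u ∧ p u = p v).card :=
      Finset.card_pos.mpr ⟨v, hvmem⟩
    omega
  have hT26 : ∀ v, G.Adj a v →
      (univ.filter fun u => G.Adj a u ∧ p u = p v).card = 2 ∨
      (univ.filter fun u => G.Adj a u ∧ p u = p v).card = 6 := by
    intro v hv
    have := pair_extract (hH (p v) v (hpadj v hv))
    rw [hTcard v hv] at this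
    tauto
  -- global counting
  set A : Finset V := univ.filter (fun u => G.Adj a u) with hA
  set PP : Finset V := A.image p with hPP
  have hmemA : ∀ {u}, u ∈ A ↔ G.Adj a u := by
    intro u; rw [hA, Finset.mem_filter]; simp
  have htrich : ∀ x : V, x = a ∨ x ∈ A ∨ x ∈ PP := by
    intro x
    have := hle2 x
    interval_cases hx : G.dist x a
    · exact Or.inl (hconn.dist_eq_zero_iff.mp hx)
    · exact Or.inr (Or.inl (hmemA.mpr (SimpleGraph.dist_eq_one_iff_adj.mp hx).symm))
    · obtain ⟨z, hz, rfl⟩ := hd2 x hx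
      exact Or.inr (Or.inr (Finset.mem_image_of_mem p (hmemA.mpr hz)))
  have ha_nA : a ∉ A := fun h => G.irrefl (hmemA.mp h)
  have hPPdist : ∀ {x}, x ∈ PP → G.dist x a = 2 := by
    intro x hx
    obtain ⟨z, hz, rfl⟩ := Finset.mem_image.mp hx
    exact hpdist z (hmemA.mp hz)
  have ha_nPP : a ∉ PP := by
    intro h
    have := hPPdist h
    rw [SimpleGraph.dist_self] at this
    omega
  have hAPPdisj : Disjoint A PP := by
    rw [Finset.disjoint_left]
    intro x hxA hxPP
    have h1 := hdista x (hmemA.mp hxA)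
    have h2 := hPPdist hxPP
    omega
  have hcard8 : Fintype.card V = 8 := card8 hconn hH hv0
  have hsplit : (univ : Finset V) = insert a (A ∪ PP) := by
    ext x
    simp only [Finset.mem_univ, true_iff, Finset.mem_insert, Finset.mem_union]
    rcases htrich x with h | h | h
    · exact Or.inl h
    · exact Or.inr (Or.inl h)
    · exact Or.inr (Or.inr h)
  have hcards : 1 + (A.card + PP.card) = 8 := by
    rw [← hcard8, ← Finset.card_univ, hsplit]
    rw [Finset.card_insert_of_notMem (by simp [ha_nA, ha_nPP]),
      Finset.card_union_of_disjoint hAPPdisj]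
    omega
  have hfib : A.card = ∑ q ∈ PP, (A.filter (fun u => p u = q)).card :=
    Finset.card_eq_sum_card_fiberwise (fun x hx => Finset.mem_image_of_mem p hx)
  have hfibval : ∀ q ∈ PP, (A.filter (fun u => p u = q)).card = 2 ∨
      (A.filter (fun u => p u = q)).card = 6 := by
    intro q hq
    obtain ⟨z, hz, rfl⟩ := Finset.mem_image.mp hq
    have : A.filter (fun u => p u = p z) = univ.filter fun u => G.Adj a u ∧ p u = p z := by
      rw [hA, Finset.filter_filter]
    rw [this]
    exact hT26 z (hmemA.mp hz)
  have hPPne : PP.Nonempty := ⟨p v0, Finset.mem_image_of_mem p (hmemA.mpr hv0)⟩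
  have hAge : 2 * PP.card ≤ A.card := by
    rw [hfib]
    calc 2 * PP.card = ∑ _q ∈ PP, 2 := by rw [Finset.sum_const]; ring
    _ ≤ _ := Finset.sum_le_sum (fun q hq => by rcases hfibval q hq with h | h <;> omega)
  have hPP1 : PP.card = 1 := by
    have h1 : 1 ≤ PP.card := Finset.card_pos.mpr hPPne
    have h2 : PP.card ≤ 2 := by omega
    interval_cases h : PP.card
    · rfl
    · exfalso
      obtain ⟨q1, q2, hq12, hPPeq⟩ := Finset.card_eq_two.mp h
      rw [hPPeq, Finset.sum_insert (by simp [hq12]), Finset.sum_singleton] at hfib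
      have f1 := hfibval q1 (by rw [hPPeq]; simp)
      have f2 := hfibval q2 (by rw [hPPeq]; simp)
      omega
  obtain ⟨q, hq⟩ := Finset.card_eq_one.mp hPP1
  have hA6 : A.card = 6 := by
    rw [hq] at hcards
    simp only [Finset.card_singleton] at hcards
    omega
  -- all pendants have pair q
  have hallq : ∀ u ∈ A, p u = q := by
    have hsub : A.filter (fun u => p u = q) ⊆ A := Finset.filter_subset _ _
    have hcard : A.card ≤ (A.filter (fun u => p u = q)).card := by
      have := hfib
      rw [hq, Finset.sum_singleton] at this
      omega
    have := Finset.eq_of_subset_of_card_le hsub hcard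
    intro u hu
    rw [← this, Finset.mem_filter] at hu
    exact hu.2
  -- structural facts
  have hqPP : q ∈ PP := by rw [hq]; exact Finset.mem_singleton_self q
  have hqdist : G.dist q a = 2 := hPPdist hqPP
  have haq : a ≠ q := by
    intro h
    rw [← h, SimpleGraph.dist_self] at hqdist
    omega
  have hq_nA : q ∉ A := Finset.disjoint_left.mp hAPPdisj.symm hqPP
  have hadjq : ∀ u ∈ A, G.Adj u q := by
    intro u hu
    have := hpadj u (hmemA.mp hu)
    rw [hallq u hu] at this
    exact this.symm
  have hnadj_aq : ¬ G.Adj a q := by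
    intro h
    have := SimpleGraph.dist_eq_one_iff_adj.mpr h.symm
    omega
  have hApairn : ∀ u w, u ∈ A → w ∈ A → u ≠ w → ¬ G.Adj u w := by
    intro u w hu hw huw hadj
    rcases hN w u (hmemA.mp hw) hadj with rfl | h
    · exact G.irrefl (hmemA.mp hu)
    · rw [hallq w hw] at h
      exact hq_nA (h ▸ hu)
  have htrich' : ∀ x : V, x = a ∨ x = q ∨ x ∈ A := by
    intro x
    rcases htrich x with h | h | h
    · exact Or.inl h
    · exact Or.inr (Or.inr h)
    · rw [hq, Finset.mem_singleton] at h
      exact Or.inr (Or.inl h)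
  -- build the isomorphism
  have hcardA : Fintype.card {x // x ∈ A} = 6 := by
    rw [Fintype.card_coe]; exact hA6
  let e : {x // x ∈ A} ≃ Fin 6 := Fintype.equivFinOfCardEq hcardA
  let φ : V → (Fin 2) ⊕ (Fin 6) := fun x =>
    if hxa : x = a then Sum.inl 0
    else if hxq : x = q then Sum.inl 1
    else Sum.inr (e ⟨x, by
      rcases htrich' x with h | h | h
      · exact absurd h hxa
      · exact absurd h hxq
      · exact h⟩)
  let ψ : (Fin 2) ⊕ (Fin 6) → V := fun y =>
    Sum.elim (fun i => if i = 0 then a else q) (fun j => ((e.symm j) : V)) y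
  have hφa : φ a = Sum.inl 0 := by simp [φ]
  have hφq : φ q = Sum.inl 1 := by simp [φ, Ne.symm haq]
  have hφu : ∀ u (hu : u ∈ A), φ u = Sum.inr (e ⟨u, hu⟩) := by
    intro u hu
    have h1 : u ≠ a := fun h => ha_nA (h ▸ hu)
    have h2 : u ≠ q := fun h => hq_nA (h ▸ hu)
    simp [φ, h1, h2]
  have hleft : Function.LeftInverse ψ φ := by
    intro x
    rcases htrich' x with rfl | rfl | h
    · rw [hφa]; simp [ψ]
    · rw [hφq]; simp [ψ]
    · rw [hφu x h]; simp [ψ]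
  have hright : Function.RightInverse ψ φ := by
    intro y
    rcases y with i | j
    · fin_cases i
      · show φ (ψ (Sum.inl 0)) = Sum.inl 0
        simp only [ψ, Sum.elim_inl, if_pos rfl]
        exact hφa
      · show φ (ψ (Sum.inl 1)) = Sum.inl 1
        have : ψ (Sum.inl 1) = q := by simp [ψ]
        rw [this, hφq]
    · show φ (ψ (Sum.inr j)) = Sum.inr j
      have h1 : ψ (Sum.inr j) = ((e.symm j) : V) := rfl
      rw [h1, hφu _ (e.symm j).2]
      congr
      simp
  have hmaprel : ∀ {x y : V},
      (completeBipartiteGraph (Fin 2) (Fin 6)).Adj (φ x) (φ y) ↔ G.Adj x y := by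
    intro x y
    have h' : ¬ G.Adj q a := fun h => hnadj_aq h.symm
    rcases htrich' x with hxa | hxq | hx <;> rcases htrich' y with hya | hyq | hy
    · rw [hxa, hya, hφa]; simp [G.irrefl]
    · rw [hxa, hyq, hφa, hφq]; simp [hnadj_aq]
    · rw [hxa, hφa, hφu y hy]
      simp only [completeBipartiteGraph_adj]
      simp [hmemA.mp hy]
    · rw [hxq, hya, hφq, hφa]; simp [h']
    · rw [hxq, hyq, hφq]; simp [G.irrefl]
    · rw [hxq, hφq, hφu y hy]
      simp only [completeBipartiteGraph_adj]
      simp [(hadjq y hy).symm]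
    · rw [hya, hφa, hφu x hx]
      simp only [completeBipartiteGraph_adj]
      simp [(hmemA.mp hx).symm]
    · rw [hyq, hφq, hφu x hx]
      simp only [completeBipartiteGraph_adj]
      simp [hadjq x hx]
    · rw [hφu x hx, hφu y hy]
      simp only [completeBipartiteGraph_adj]
      constructor
      · intro h; simp at h
      · intro h
        exfalso
        by_cases hxy : x = y
        · exact G.irrefl (hxy ▸ h)
        · exact hApairn x y hx hy hxy h
  exact ⟨⟨⟨φ, ψ, hleft, hright⟩, hmaprel⟩⟩

private lemma iso_dist {W : Type*} {H : SimpleGraph W} (φ : G ≃g H) (hconn : G.Connected)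
    (x y : V) : H.dist (φ x) (φ y) = G.dist x y := by
  have hr : G.Reachable x y := hconn x y
  apply le_antisymm
  · obtain ⟨w, hw⟩ := hr.exists_walk_length_eq_dist
    calc H.dist (φ x) (φ y) ≤ (w.map φ.toHom).length := SimpleGraph.dist_le _
    _ = w.length := SimpleGraph.Walk.length_map _ _
    _ = G.dist x y := hw
  · have hr' : H.Reachable (φ x) (φ y) := ⟨(Classical.choice hr).map φ.toHom⟩
    obtain ⟨w', hw'⟩ := hr'.exists_walk_length_eq_dist
    have h1 : G.dist (φ.symm (φ x)) (φ.symm (φ y)) ≤ (w'.map φ.symm.toHom).length :=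
      SimpleGraph.dist_le _
    rw [SimpleGraph.Walk.length_map, hw'] at h1
    simpa using h1

private lemma K_dist_two (x y : Fin 2 ⊕ Fin 6) (hxy : x ≠ y)
    (hadj : ¬ (completeBipartiteGraph (Fin 2) (Fin 6)).Adj x y) :
    (completeBipartiteGraph (Fin 2) (Fin 6)).dist x y = 2 := by
  have hw : ∃ w : (completeBipartiteGraph (Fin 2) (Fin 6)).Walk x y, w.length = 2 := by
    rcases x with i | j <;> rcases y with i' | j'
    · exact ⟨SimpleGraph.Walk.cons (by simp) (SimpleGraph.Walk.cons
        (show (completeBipartiteGraph (Fin 2) (Fin 6)).Adj (Sum.inr 0) (Sum.inl i') by simp)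
        SimpleGraph.Walk.nil), by simp⟩
    · exact absurd (by simp) hadj
    · exact absurd (by simp) hadj
    · exact ⟨SimpleGraph.Walk.cons (by simp) (SimpleGraph.Walk.cons
        (show (completeBipartiteGraph (Fin 2) (Fin 6)).Adj (Sum.inl 0) (Sum.inr j') by simp)
        SimpleGraph.Walk.nil), by simp⟩
  obtain ⟨w, hwlen⟩ := hw
  have hle : (completeBipartiteGraph (Fin 2) (Fin 6)).dist x y ≤ 2 := by
    have := SimpleGraph.dist_le w
    omega
  have h0 : (completeBipartiteGraph (Fin 2) (Fin 6)).dist x y ≠ 0 := by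
    intro h0
    exact hxy ((SimpleGraph.Reachable.dist_eq_zero_iff ⟨w⟩).mp h0)
  have h1 : (completeBipartiteGraph (Fin 2) (Fin 6)).dist x y ≠ 1 := by
    intro h1
    exact hadj (SimpleGraph.dist_eq_one_iff_adj.mp h1)
  omega

private lemma K_dist_ll (i i' : Fin 2) :
    (completeBipartiteGraph (Fin 2) (Fin 6)).dist (Sum.inl i) (Sum.inl i')
      = if i = i' then 0 else 2 := by
  by_cases h : i = i'
  · simp [h]
  · rw [if_neg h]
    exact K_dist_two _ _ (by simp [h]) (by simp)

private lemma K_dist_rr (j j' : Fin 6) :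
    (completeBipartiteGraph (Fin 2) (Fin 6)).dist (Sum.inr j) (Sum.inr j')
      = if j = j' then 0 else 2 := by
  by_cases h : j = j'
  · simp [h]
  · rw [if_neg h]
    exact K_dist_two _ _ (by simp [h]) (by simp)

private lemma K_dist_lr (i : Fin 2) (j : Fin 6) :
    (completeBipartiteGraph (Fin 2) (Fin 6)).dist (Sum.inl i) (Sum.inr j) = 1 :=
  SimpleGraph.dist_eq_one_iff_adj.mpr (by simp)

private lemma K_dist_rl (j : Fin 6) (i : Fin 2) :
    (completeBipartiteGraph (Fin 2) (Fin 6)).dist (Sum.inr j) (Sum.inl i) = 1 :=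
  SimpleGraph.dist_eq_one_iff_adj.mpr (by simp)

private lemma K_closer (i : Fin 2) (j : Fin 6) :
    (closerSet (completeBipartiteGraph (Fin 2) (Fin 6)) (Sum.inl i) (Sum.inr j)).ncard = 6 ∧
    (closerSet (completeBipartiteGraph (Fin 2) (Fin 6)) (Sum.inr j) (Sum.inl i)).ncard = 2 := by
  constructor
  · have hset : closerSet (completeBipartiteGraph (Fin 2) (Fin 6)) (Sum.inl i) (Sum.inr j)
        = ↑(insert (Sum.inl i : Fin 2 ⊕ Fin 6)
            ((univ.filter (fun x : Fin 2 ⊕ Fin 6 => x.isRight)).erase (Sum.inr j))) := by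
      ext x
      simp only [closerSet, Set.mem_setOf_eq, Finset.coe_insert, Set.mem_insert_iff,
        Finset.coe_erase, Set.mem_diff, Finset.mem_coe, Finset.mem_filter, Finset.mem_univ,
        true_and, Set.mem_singleton_iff]
      rcases x with i' | j'
      · rw [K_dist_ll, K_dist_lr]
        by_cases h : i' = i <;> simp [h]
      · rw [K_dist_rl, K_dist_rr]
        by_cases h : j' = j <;> simp [h]
    rw [hset, Set.ncard_coe_finset,
      Finset.card_insert_of_notMem (by simp), Finset.card_erase_of_mem (by simp)]
    decide
  · have hset : closerSet (completeBipartiteGraph (Fin 2) (Fin 6)) (Sum.inr j) (Sum.inl i)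
        = ↑(insert (Sum.inr j : Fin 2 ⊕ Fin 6)
            ((univ.filter (fun x : Fin 2 ⊕ Fin 6 => x.isLeft)).erase (Sum.inl i))) := by
      ext x
      simp only [closerSet, Set.mem_setOf_eq, Finset.coe_insert, Set.mem_insert_iff,
        Finset.coe_erase, Set.mem_diff, Finset.mem_coe, Finset.mem_filter, Finset.mem_univ,
        true_and, Set.mem_singleton_iff]
      rcases x with i' | j'
      · rw [K_dist_ll, K_dist_lr]
        by_cases h : i' = i <;> simp [h]
      · rw [K_dist_rl, K_dist_rr]
        by_cases h : j' = j <;> simp [h]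
    rw [hset, Set.ncard_coe_finset,
      Finset.card_insert_of_notMem (by simp), Finset.card_erase_of_mem (by simp)]
    decide

end K26Aux

/-- A finite connected graph with at least one edge is 3-GNDB with parameter `γ = 2`
if and only if it is isomorphic to `K_{2,6}`. -/
theorem stmt_4 {V : Type*} [Fintype V] (G : SimpleGraph V) (hconn : G.Connected)
    (hedge : ∃ a b : V, G.Adj a b) :
    (∀ a b : V, G.Adj a b →
        ({(closerSet G a b).ncard, (closerSet G b a).ncard} : Set ℕ) = {2, 6}) ↔
      Nonempty (G ≃g completeBipartiteGraph (Fin 2) (Fin 6)) := by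
  constructor
  · intro hH
    exact K26Aux.forward hconn hedge hH
  · rintro ⟨φ⟩ a b hab
    have hnc : ∀ u v : V,
        (closerSet G u v).ncard
          = (closerSet (completeBipartiteGraph (Fin 2) (Fin 6)) (φ u) (φ v)).ncard := by
      intro u v
      have himg : closerSet G u v
          = φ ⁻¹' (closerSet (completeBipartiteGraph (Fin 2) (Fin 6)) (φ u) (φ v)) := by
        ext x
        simp only [closerSet, Set.mem_setOf_eq, Set.mem_preimage]
        rw [K26Aux.iso_dist φ hconn, K26Aux.iso_dist φ hconn]
      have hpre : φ ⁻¹' (closerSet (completeBipartiteGraph (Fin 2) (Fin 6)) (φ u) (φ v))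
          = φ.symm '' (closerSet (completeBipartiteGraph (Fin 2) (Fin 6)) (φ u) (φ v)) := by
        ext x
        constructor
        · intro hx
          exact ⟨φ x, hx, by simp⟩
        · rintro ⟨y, hy, rfl⟩
          simpa using hy
      rw [himg, hpre, Set.ncard_image_of_injective _ φ.symm.injective]
    rw [hnc, hnc]
    have hKadj : (completeBipartiteGraph (Fin 2) (Fin 6)).Adj (φ a) (φ b) := φ.map_adj_iff.mpr hab
    rcases ha : φ a with i | j <;> rcases hb : φ b with i' | j'
    · rw [ha, hb] at hKadj; simp at hKadj
    · obtain ⟨h6, h2⟩ := K26Aux.K_closer i j'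
      rw [h6, h2]
      exact Set.pair_comm 6 2
    · obtain ⟨h6, h2⟩ := K26Aux.K_closer i' j
      rw [h2, h6]
    · rw [ha, hb] at hKadj; simp at hKadj
end

section
/- A finite connected graph Γ with at least one edge is 3-GNDB with parameter γ = 1 if and only if Γ is isomorphic to the complete bipartite graph K_{1,3} (the star on 4 vertices). -/
namespace StmtAux

open SimpleGraph

lemma mem_closerSet {V : Type*} {G : SimpleGraph V} {a b x : V} :
    x ∈ closerSet G a b ↔ G.dist x a < G.dist x b := Iff.rfl

lemma pair_cases {m n : ℕ} (h : ({m, n} : Set ℕ) = {1, 3}) :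
    (m = 1 ∧ n = 3) ∨ (m = 3 ∧ n = 1) := by
  have h1 : (1 : ℕ) ∈ ({m, n} : Set ℕ) := h ▸ (by simp)
  have h3 : (3 : ℕ) ∈ ({m, n} : Set ℕ) := h ▸ (by simp)
  have hm : m ∈ ({1, 3} : Set ℕ) := h ▸ (by simp)
  simp only [Set.mem_insert_iff, Set.mem_singleton_iff] at h1 h3 hm
  omega

lemma singleton_of_ncard_one {V : Type*} {S : Set V} {a : V}
    (h : S.ncard = 1) (ha : a ∈ S) : S = {a} := by
  obtain ⟨c, rfl⟩ := Set.ncard_eq_one.mp h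
  simp_all

lemma three_of_ncard_three {V : Type*} {S : Set V} {a : V}
    (h : S.ncard = 3) (ha : a ∈ S) :
    ∃ u v, a ≠ u ∧ a ≠ v ∧ u ≠ v ∧ S = {a, u, v} := by
  obtain ⟨x, y, z, hxy, hxz, hyz, rfl⟩ := Set.ncard_eq_three.mp h
  simp only [Set.mem_insert_iff, Set.mem_singleton_iff] at ha
  rcases ha with rfl | rfl | rfl
  · exact ⟨y, z, hxy, hxz, hyz, rfl⟩
  · exact ⟨x, z, hxy.symm, hyz, hxz, by ext w; simp; tauto⟩
  · exact ⟨x, y, hxz.symm, hyz.symm, hxy, by ext w; simp; tauto⟩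

section Dist

variable {V : Type*} {G : SimpleGraph V}

lemma adj_dist {a b : V} (h : G.Adj a b) : G.dist a b = 1 :=
  dist_eq_one_iff_adj.mpr h

lemma dist_le_adj (hc : G.Connected) {b c : V} (h : G.Adj b c) (x : V) :
    G.dist x c ≤ G.dist x b + 1 := by
  have := hc.dist_triangle (u := x) (v := b) (w := c)
  rwa [adj_dist h] at this

lemma step (hc : G.Connected) {x y : V} (hxy : x ≠ y) :
    ∃ c, G.Adj x c ∧ G.dist c y + 1 = G.dist x y := by
  obtain ⟨p, hp⟩ := hc.exists_walk_length_eq_dist x y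
  cases p with
  | nil => exact absurd rfl hxy
  | cons h q =>
    rename_i c
    refine ⟨c, h, ?_⟩
    rw [Walk.length_cons] at hp
    have h1 : G.dist c y ≤ q.length := dist_le q
    have h2 : G.dist x y ≤ 1 + G.dist c y := by
      have := hc.dist_triangle (u := x) (v := c) (w := y)
      rwa [adj_dist h] at this
    omega

lemma le_of_closer_singleton {a b : V} (h : closerSet G a b = {a}) {x : V} (hx : x ≠ a) :
    G.dist x b ≤ G.dist x a := by
  by_contra hlt
  push_neg at hlt
  have hmem : x ∈ closerSet G a b := mem_closerSet.mpr hlt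
  rw [h] at hmem
  exact hx hmem

lemma closer_ncard_le_one {a b : V} (h : ∀ x, x ≠ a → G.dist x b ≤ G.dist x a) :
    (closerSet G a b).ncard ≤ 1 := by
  have hsub : closerSet G a b ⊆ {a} := by
    intro x hx
    by_contra hxa
    have := h x hxa
    rw [mem_closerSet] at hx
    omega
  calc (closerSet G a b).ncard ≤ ({a} : Set V).ncard :=
        Set.ncard_le_ncard hsub (Set.finite_singleton a)
    _ = 1 := Set.ncard_singleton a

end Dist

section Core

variable {V : Type*} [Fintype V] {G : SimpleGraph V}

lemma key
    (hG : ∀ a b : V, G.Adj a b →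
      ({(closerSet G a b).ncard, (closerSet G b a).ncard} : Set ℕ) = {1, 3})
    {a b : V} (hab : G.Adj a b) :
    (closerSet G a b = {a} ∧ (closerSet G b a).ncard = 3) ∨
    (closerSet G b a = {b} ∧ (closerSet G a b).ncard = 3) := by
  have ha : a ∈ closerSet G a b := by
    rw [mem_closerSet, dist_self, adj_dist hab]; omega
  have hb : b ∈ closerSet G b a := by
    rw [mem_closerSet, dist_self, adj_dist hab.symm]; omega
  rcases pair_cases (hG a b hab) with ⟨h1, h3⟩ | ⟨h3, h1⟩
  · exact Or.inl ⟨singleton_of_ncard_one h1 ha, h3⟩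
  · exact Or.inr ⟨singleton_of_ncard_one h1 hb, h3⟩

variable (hc : G.Connected)
  (hG : ∀ a b : V, G.Adj a b →
      ({(closerSet G a b).ncard, (closerSet G b a).ncard} : Set ℕ) = {1, 3})

include hc hG

lemma sub1 {a b c : V} (hab : G.Adj a b) (hac : G.Adj a c) (hbc : G.Adj b c)
    (h1 : ∀ x, x ≠ a → G.dist x b ≤ G.dist x a)
    (h2 : ∀ x, x ≠ c → G.dist x a ≤ G.dist x c) : False := by
  have dab : G.dist a b = 1 := adj_dist hab
  have dba : G.dist b a = 1 := adj_dist hab.symm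
  have dac : G.dist a c = 1 := adj_dist hac
  have dca : G.dist c a = 1 := adj_dist hac.symm
  have dbc : G.dist b c = 1 := adj_dist hbc
  have dcb : G.dist c b = 1 := adj_dist hbc.symm
  -- |W_ac| = 3
  have h3ac : (closerSet G a c).ncard = 3 := by
    rcases key hG hac with ⟨_, h3⟩ | ⟨_, h3⟩
    · exact absurd h3 (by have := closer_ncard_le_one (a := c) (b := a) h2; omega)
    · exact h3
  have daa : G.dist a a = 0 := SimpleGraph.dist_self
  have dbb : G.dist b b = 0 := SimpleGraph.dist_self
  have dcc : G.dist c c = 0 := SimpleGraph.dist_self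
  have hamem : a ∈ closerSet G a c := by rw [mem_closerSet]; omega
  obtain ⟨u, v, hau, hav, huv, hWac⟩ := three_of_ncard_three h3ac hamem
  -- facts about u, v
  have hfact : ∀ t, t ∈ closerSet G a c → t ≠ a →
      t ≠ b ∧ t ≠ c ∧ G.dist t b = G.dist t a ∧ G.dist t a < G.dist t c := by
    intro t ht hta
    rw [mem_closerSet] at ht
    have htc : t ≠ c := by rintro rfl; rw [dist_self] at ht; omega
    have htb : t ≠ b := by rintro rfl; rw [dba, dbc] at ht; omega
    have l1 : G.dist t b ≤ G.dist t a := h1 t hta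
    have l2 : G.dist t c ≤ G.dist t b + 1 := dist_le_adj hc hbc t
    exact ⟨htb, htc, by omega, ht⟩
  have humem : u ∈ closerSet G a c := by rw [hWac]; simp
  have hvmem : v ∈ closerSet G a c := by rw [hWac]; simp
  obtain ⟨hub, huc, hueq, hult⟩ := hfact u humem (Ne.symm hau)
  obtain ⟨hvb, hvc, hveq, hvlt⟩ := hfact v hvmem (Ne.symm hav)
  -- |W_bc| = 3 and W_bc = {b, u, v}
  have h3bc : (closerSet G b c).ncard = 3 := by
    rcases key hG hbc with ⟨_, h3⟩ | ⟨_, h3⟩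
    · refine absurd h3 ?_
      have hle : (closerSet G c b).ncard ≤ 1 := by
        refine closer_ncard_le_one ?_
        intro x hxc
        by_cases hxa : x = a
        · subst hxa; omega
        · exact le_trans (h1 x hxa) (h2 x hxc)
      omega
    · exact h3
  have hWbc : ({b, u, v} : Set V) = closerSet G b c := by
    refine Set.eq_of_subset_of_ncard_le ?_ ?_ (Set.toFinite _)
    · intro t ht
      simp only [Set.mem_insert_iff, Set.mem_singleton_iff] at ht
      rcases ht with rfl | rfl | rfl
      · rw [mem_closerSet]; omega
      · rw [mem_closerSet]; omega
      · rw [mem_closerSet]; omega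
    · rw [h3bc]
      have : ({b, u, v} : Set V).ncard = 3 :=
        Set.ncard_eq_three.mpr ⟨b, u, v, Ne.symm hub, Ne.symm hvb, huv, rfl⟩
      omega
  -- |W_ba| = 3 gives contradiction
  have h3ba : (closerSet G b a).ncard = 3 := by
    rcases key hG hab with ⟨_, h3⟩ | ⟨_, h3⟩
    · exact h3
    · exact absurd h3 (by have := closer_ncard_le_one (a := a) (b := b) h1; omega)
  have hbmem : b ∈ closerSet G b a := by rw [mem_closerSet]; omega
  obtain ⟨x, y, hbx, hby, hxy, hWba⟩ := three_of_ncard_three h3ba hbmem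
  have hxmem : x ∈ closerSet G b a := by rw [hWba]; simp
  rw [mem_closerSet] at hxmem
  have hxa : x ≠ a := by intro h; subst h; omega
  have hxc : x ≠ c := by intro h; subst h; omega
  have hxin : x ∈ closerSet G b c := by
    rw [mem_closerSet]
    have := h2 x hxc
    omega
  rw [← hWbc] at hxin
  simp only [Set.mem_insert_iff, Set.mem_singleton_iff] at hxin
  rcases hxin with rfl | rfl | rfl
  · exact hbx rfl
  · omega
  · omega

lemma sub2 {a b c : V} (hab : G.Adj a b) (hac : G.Adj a c) (hbc : G.Adj b c)
    (h1 : ∀ x, x ≠ a → G.dist x b ≤ G.dist x a)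
    (h2 : ∀ x, x ≠ a → G.dist x c ≤ G.dist x a)
    (h3 : ∀ x, x ≠ b → G.dist x c ≤ G.dist x b) : False := by
  have dab : G.dist a b = 1 := adj_dist hab
  have dba : G.dist b a = 1 := adj_dist hab.symm
  have dac : G.dist a c = 1 := adj_dist hac
  have dca : G.dist c a = 1 := adj_dist hac.symm
  have dbc : G.dist b c = 1 := adj_dist hbc
  have dcb : G.dist c b = 1 := adj_dist hbc.symm
  have daa : G.dist a a = 0 := SimpleGraph.dist_self
  have dbb : G.dist b b = 0 := SimpleGraph.dist_self
  have dcc : G.dist c c = 0 := SimpleGraph.dist_self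
  -- |W_ca| = 3
  have h3ca : (closerSet G c a).ncard = 3 := by
    rcases key hG hac with ⟨_, h3⟩ | ⟨_, h3⟩
    · exact h3
    · exact absurd h3 (by have := closer_ncard_le_one (a := a) (b := c) h2; omega)
  have hcmem : c ∈ closerSet G c a := by rw [mem_closerSet]; omega
  obtain ⟨u, v, hcu, hcv, huv, hWca⟩ := three_of_ncard_three h3ca hcmem
  have hfactca : ∀ t, t ∈ closerSet G c a → t ≠ c →
      t ≠ a ∧ t ≠ b ∧ G.dist t c < G.dist t a ∧ G.dist t a ≤ G.dist t c + 1 := by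
    intro t ht _
    rw [mem_closerSet] at ht
    have hta : t ≠ a := by rintro h; subst h; omega
    have htb : t ≠ b := by rintro h; subst h; omega
    exact ⟨hta, htb, ht, dist_le_adj hc hac.symm t⟩
  have humem : u ∈ closerSet G c a := by rw [hWca]; simp
  have hvmem : v ∈ closerSet G c a := by rw [hWca]; simp
  obtain ⟨hua, hub, hult, hule⟩ := hfactca u humem (Ne.symm hcu)
  obtain ⟨hva, hvb, hvlt, hvle⟩ := hfactca v hvmem (Ne.symm hcv)
  -- |W_ba| = 3 and W_ba = {b, u, v}
  have h3ba : (closerSet G b a).ncard = 3 := by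
    rcases key hG hab with ⟨_, h3⟩ | ⟨_, h3⟩
    · exact h3
    · exact absurd h3 (by have := closer_ncard_le_one (a := a) (b := b) h1; omega)
  have hbmem : b ∈ closerSet G b a := by rw [mem_closerSet]; omega
  obtain ⟨x, y, hbx, hby, hxy, hWba⟩ := three_of_ncard_three h3ba hbmem
  have hmemuv : ∀ t, t ∈ closerSet G b a → t ≠ b → t = u ∨ t = v := by
    intro t ht htb
    rw [mem_closerSet] at ht
    have htc : t ≠ c := by rintro h; subst h; omega
    have h4 : G.dist t c ≤ G.dist t b := h3 t htb
    have : t ∈ closerSet G c a := by rw [mem_closerSet]; omega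
    rw [hWca] at this
    simp only [Set.mem_insert_iff, Set.mem_singleton_iff] at this
    tauto
  have hxmem : x ∈ closerSet G b a := by rw [hWba]; simp
  have hymem : y ∈ closerSet G b a := by rw [hWba]; simp
  have hWba' : closerSet G b a = {b, u, v} := by
    rcases hmemuv x hxmem (Ne.symm hbx) with rfl | rfl <;>
      rcases hmemuv y hymem (Ne.symm hby) with rfl | rfl
    · exact absurd rfl hxy
    · exact hWba
    · rw [hWba]; ext w; simp only [Set.mem_insert_iff, Set.mem_singleton_iff]; tauto
    · exact absurd rfl hxy
  have humem' : u ∈ closerSet G b a := by rw [hWba']; simp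
  have hvmem' : v ∈ closerSet G b a := by rw [hWba']; simp
  rw [mem_closerSet] at humem' hvmem'
  have hueq : G.dist u c = G.dist u b := le_antisymm (h3 u hub) (by omega)
  have hveq : G.dist v c = G.dist v b := le_antisymm (h3 v hvb) (by omega)
  -- |W_cb| = 3 gives contradiction
  have h3cb : (closerSet G c b).ncard = 3 := by
    rcases key hG hbc with ⟨_, h3'⟩ | ⟨_, h3'⟩
    · exact h3'
    · exact absurd h3' (by have := closer_ncard_le_one (a := b) (b := c) h3; omega)
  have hcmem' : c ∈ closerSet G c b := by rw [mem_closerSet]; omega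
  obtain ⟨p, q, hcp, hcq, hpq, hWcb⟩ := three_of_ncard_three h3cb hcmem'
  have hpmem : p ∈ closerSet G c b := by rw [hWcb]; simp
  rw [mem_closerSet] at hpmem
  have hpb : p ≠ b := by rintro h; subst h; omega
  have hpa : p ≠ a := by rintro h; subst h; omega
  have hpu : p ≠ u := by rintro h; subst h; omega
  have hpv : p ≠ v := by rintro h; subst h; omega
  have hpnba : p ∉ closerSet G b a := by
    rw [hWba']
    simp only [Set.mem_insert_iff, Set.mem_singleton_iff]
    push_neg
    exact ⟨hpb, hpu, hpv⟩
  rw [mem_closerSet] at hpnba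
  push_neg at hpnba
  have hple : G.dist p b ≤ G.dist p a := h1 p hpa
  have : p ∈ closerSet G c a := by rw [mem_closerSet]; omega
  rw [hWca] at this
  simp only [Set.mem_insert_iff, Set.mem_singleton_iff] at this
  tauto

lemma claimA {a b : V} (hab : G.Adj a b)
    (h1 : ∀ x, x ≠ a → G.dist x b ≤ G.dist x a) {c : V} (hac : G.Adj a c) : c = b := by
  by_contra hcb
  have hbc : G.Adj b c := by
    have hca : c ≠ a := fun h => G.irrefl (h ▸ hac)
    have hle : G.dist c b ≤ G.dist c a := h1 c hca
    have dca : G.dist c a = 1 := adj_dist hac.symm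
    have hpos : 0 < G.dist c b := hc.pos_dist_of_ne hcb
    have : G.dist c b = 1 := by omega
    exact (dist_eq_one_iff_adj.mp this).symm
  rcases key hG hac with ⟨hs, _⟩ | ⟨hs, _⟩
  · have h2 : ∀ x, x ≠ a → G.dist x c ≤ G.dist x a :=
      fun x hx => le_of_closer_singleton hs hx
    rcases key hG hbc with ⟨hs', _⟩ | ⟨hs', _⟩
    · exact sub2 hc hG hab hac hbc h1 h2 (fun x hx => le_of_closer_singleton hs' hx)
    · exact sub2 hc hG hac hab hbc.symm h2 h1 (fun x hx => le_of_closer_singleton hs' hx)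
  · exact sub1 hc hG hab hac hbc h1 (fun x hx => le_of_closer_singleton hs hx)

lemma star_structure (hedge : ∃ a b : V, G.Adj a b) :
    ∃ a b u v : V,
      ([a, u, v].Pairwise (· ≠ ·)) ∧ b ≠ a ∧ b ≠ u ∧ b ≠ v ∧
      (∀ x : V, x = a ∨ x = b ∨ x = u ∨ x = v) ∧
      G.Adj b a ∧ G.Adj b u ∧ G.Adj b v ∧
      ¬G.Adj a u ∧ ¬G.Adj a v ∧ ¬G.Adj u v := by
  obtain ⟨a0, b0, hab0⟩ := hedge
  obtain ⟨a, b, hab, hsing, h3⟩ :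
      ∃ a b, G.Adj a b ∧ closerSet G a b = {a} ∧ (closerSet G b a).ncard = 3 := by
    rcases key hG hab0 with ⟨hs, h3⟩ | ⟨hs, h3⟩
    · exact ⟨a0, b0, hab0, hs, h3⟩
    · exact ⟨b0, a0, hab0.symm, hs, h3⟩
  have h1 : ∀ x, x ≠ a → G.dist x b ≤ G.dist x a :=
    fun x hx => le_of_closer_singleton hsing hx
  have hCA : ∀ c, G.Adj a c → c = b := fun c h => claimA hc hG hab h1 h
  have dab : G.dist a b = 1 := adj_dist hab
  have dba : G.dist b a = 1 := adj_dist hab.symm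
  have pend : ∀ x, x ≠ a → G.dist x a = G.dist x b + 1 := by
    intro x hx
    obtain ⟨c, hacc, hd⟩ := step hc (Ne.symm hx)
    rw [hCA c hacc] at hd
    have le1 : G.dist x a ≤ G.dist x b + 1 := dist_le_adj hc hab.symm x
    have e1 : G.dist b x = G.dist x b := SimpleGraph.dist_comm
    have e2 : G.dist a x = G.dist x a := SimpleGraph.dist_comm
    omega
  have hbmem : b ∈ closerSet G b a := by
    rw [mem_closerSet, SimpleGraph.dist_self, dba]; omega
  obtain ⟨u, v, hbu, hbv, huv, hWba⟩ := three_of_ncard_three h3 hbmem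
  have cover : ∀ x : V, x = a ∨ x = b ∨ x = u ∨ x = v := by
    intro x
    by_cases hx : x = a
    · exact Or.inl hx
    · have hm : x ∈ closerSet G b a := by
        rw [mem_closerSet]; have := pend x hx; omega
      rw [hWba] at hm
      simp only [Set.mem_insert_iff, Set.mem_singleton_iff] at hm
      tauto
  have hane : a ∉ closerSet G b a := by
    rw [mem_closerSet, SimpleGraph.dist_self, dab]; omega
  rw [hWba] at hane
  simp only [Set.mem_insert_iff, Set.mem_singleton_iff] at hane
  push_neg at hane
  obtain ⟨hne_ab, hau, hav⟩ := hane
  have nAu : ¬ G.Adj a u := fun h => hbu (hCA u h).symm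
  have nAv : ¬ G.Adj a v := fun h => hbv (hCA v h).symm
  have pendu : G.dist u a = G.dist u b + 1 := pend u (Ne.symm hau)
  have pendv : G.dist v a = G.dist v b + 1 := pend v (Ne.symm hav)
  -- helper for killing Adj u v
  have killA : ∀ x y : V, b ≠ x → b ≠ y → a ≠ x → a ≠ y → x ≠ y →
      (∀ w : V, w = a ∨ w = b ∨ w = x ∨ w = y) →
      G.dist x a = G.dist x b + 1 → G.dist y a = G.dist y b + 1 →
      G.Adj x y → G.Adj x b → False := by
    intro x y hbx hby hax hay hxy cov pendx pendy hxyA hxbA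
    have dxb : G.dist x b = 1 := adj_dist hxbA
    have dax : G.dist a x = 2 := by rw [SimpleGraph.dist_comm]; omega
    have hamem : a ∈ closerSet G b x := by
      rw [mem_closerSet, dab, dax]; omega
    rcases key hG hxbA with ⟨hs, h3'⟩ | ⟨hs, _⟩
    · -- W_xb = {x}, |W_bx| = 3
      by_cases hybA : G.Adj y b
      · -- W_bx ⊆ {a, b} : contradiction with ncard 3
        have hsub : closerSet G b x ⊆ {a, b} := by
          intro w hw
          rw [mem_closerSet] at hw
          rcases cov w with rfl | rfl | rfl | rfl
          · simp
          · simp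
          · rw [SimpleGraph.dist_self] at hw; omega
          · have d1 : G.dist w b = 1 := adj_dist hybA
            have d2 : G.dist w x = 1 := adj_dist hxyA.symm
            omega
        have : (closerSet G b x).ncard ≤ 2 := by
          calc (closerSet G b x).ncard ≤ ({a, b} : Set V).ncard :=
                Set.ncard_le_ncard hsub (Set.toFinite _)
            _ ≤ 2 := by
                have := Set.ncard_insert_le a ({b} : Set V)
                simpa using this
        omega
      · -- y ∈ W_xb, but W_xb = {x}
        have dyb2 : 2 ≤ G.dist y b := by
          have hyb : y ≠ b := Ne.symm hby
          have hpos : 0 < G.dist y b := hc.pos_dist_of_ne hyb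
          have : G.dist y b ≠ 1 := fun h => hybA (dist_eq_one_iff_adj.mp h)
          omega
        have hymem : y ∈ closerSet G x b := by
          rw [mem_closerSet]
          have : G.dist y x = 1 := adj_dist hxyA.symm
          omega
        rw [hs] at hymem
        exact hxy (hymem.symm)
    · -- W_bx = {b} : but a ∈ W_bx
      rw [hs] at hamem
      exact hne_ab hamem
  have nUV : ¬ G.Adj u v := by
    intro huvA
    by_cases hub : G.Adj u b
    · exact killA u v hbu hbv hau hav huv cover pendu pendv huvA hub
    · by_cases hvb : G.Adj v b
      · exact killA v u hbv hbu hav hau (Ne.symm huv) (fun w => by rcases cover w with h|h|h|h <;> tauto)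
          pendv pendu huvA.symm hvb
      · -- neither adjacent to b : step argument
        obtain ⟨w, huw, hdw⟩ := step hc (show u ≠ b from Ne.symm hbu)
        obtain ⟨w', hvw, hdw'⟩ := step hc (show v ≠ b from Ne.symm hbv)
        have hwv : w = v := by
          rcases cover w with rfl | rfl | rfl | rfl
          · exact absurd huw.symm nAu
          · exact absurd huw hub
          · exact absurd huw (G.irrefl)
          · rfl
        have hw'u : w' = u := by
          rcases cover w' with rfl | rfl | rfl | rfl
          · exact absurd hvw.symm nAv
          · exact absurd hvw hvb
          · rfl
          · exact absurd hvw (G.irrefl)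
        subst hwv; subst hw'u
        omega
  -- u and v adjacent to b
  have hAub : G.Adj u b := by
    obtain ⟨w, huw, hdw⟩ := step hc (show u ≠ a from Ne.symm hau)
    rcases cover w with rfl | rfl | rfl | rfl
    · exact absurd huw.symm nAu
    · exact huw
    · exact absurd huw (G.irrefl)
    · exact absurd huw nUV
  have hAvb : G.Adj v b := by
    obtain ⟨w, hvw, hdw⟩ := step hc (show v ≠ a from Ne.symm hav)
    rcases cover w with rfl | rfl | rfl | rfl
    · exact absurd hvw.symm nAv
    · exact hvw
    · exact absurd hvw (fun h => nUV h.symm)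
    · exact absurd hvw (G.irrefl)
  refine ⟨a, b, u, v, ?_, Ne.symm hne_ab, hbu, hbv, cover, hab.symm, hAub.symm, hAvb.symm,
    nAu, nAv, nUV⟩
  simp [hau, hav, huv]

end Core

section Iso

lemma star_iso {V : Type*} {G : SimpleGraph V} {a b u v : V}
    (hpw : [a, u, v].Pairwise (· ≠ ·)) (hba : b ≠ a) (hbu : b ≠ u) (hbv : b ≠ v)
    (cover : ∀ x : V, x = a ∨ x = b ∨ x = u ∨ x = v)
    (hBA : G.Adj b a) (hBU : G.Adj b u) (hBV : G.Adj b v)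
    (nAU : ¬G.Adj a u) (nAV : ¬G.Adj a v) (nUV : ¬G.Adj u v) :
    Nonempty (G ≃g completeBipartiteGraph (Fin 1) (Fin 3)) := by
  classical
  simp only [List.pairwise_cons, List.mem_cons, List.mem_singleton] at hpw
  have hau : a ≠ u := hpw.1 u (Or.inl rfl)
  have hav : a ≠ v := hpw.1 v (Or.inr (Or.inl rfl))
  have huv : u ≠ v := hpw.2.1 v (Or.inl rfl)
  have hab' : a ≠ b := Ne.symm hba
  have hub' : u ≠ b := Ne.symm hbu
  have hvb' : v ≠ b := Ne.symm hbv
  have hAdj : ∀ x y : V, G.Adj x y ↔ ((x = b ∧ y ≠ b) ∨ (y = b ∧ x ≠ b)) := by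
    intro x y
    constructor
    · intro h
      have hxy : x ≠ y := h.ne
      by_cases hxb : x = b
      · exact Or.inl ⟨hxb, fun hyb => hxy (hxb.trans hyb.symm)⟩
      · by_cases hyb : y = b
        · exact Or.inr ⟨hyb, hxb⟩
        · exfalso
          rcases cover x with rfl | rfl | rfl | rfl <;> rcases cover y with rfl | rfl | rfl | rfl <;>
            first
              | exact hxy rfl
              | exact hxb rfl
              | exact hyb rfl
              | exact nAU h
              | exact nAV h
              | exact nUV h
              | exact nAU h.symm
              | exact nAV h.symm
              | exact nUV h.symm
    · rintro (⟨rfl, hy⟩ | ⟨rfl, hx⟩)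
      · rcases cover y with rfl | rfl | rfl | rfl
        · exact hBA
        · exact absurd rfl hy
        · exact hBU
        · exact hBV
      · rcases cover x with rfl | rfl | rfl | rfl
        · exact hBA.symm
        · exact absurd rfl hx
        · exact hBU.symm
        · exact hBV.symm
  refine ⟨⟨⟨fun x => if x = b then Sum.inl 0 else if x = a then Sum.inr 0
      else if x = u then Sum.inr 1 else Sum.inr 2,
    fun s => Sum.casesOn s (fun _ => b) (fun i => if i = 0 then a else if i = 1 then u else v),
    ?_, ?_⟩, ?_⟩⟩
  · intro x
    rcases cover x with rfl | rfl | rfl | rfl <;>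
      simp [hab', hau, hav, huv, hub', hvb', Ne.symm hau, Ne.symm hav, Ne.symm huv,
        hba, hbu, hbv]
  · intro s
    rcases s with i | i
    · fin_cases i <;> simp
    · fin_cases i <;>
        simp [hab', hau, hav, huv, hub', hvb', Ne.symm hau, Ne.symm hav, Ne.symm huv]
  · intro x y
    simp only [Equiv.coe_fn_mk]
    rw [hAdj x y]
    rcases cover x with rfl | rfl | rfl | rfl <;> rcases cover y with rfl | rfl | rfl | rfl <;>
      simp [hab', hau, hav, huv, hub', hvb', hba, hbu, hbv,
        Ne.symm hau, Ne.symm hav, Ne.symm huv, Ne.symm hba, Ne.symm hbu, Ne.symm hbv]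

end Iso

section Transfer

open SimpleGraph

lemma iso_dist {V W : Type*} {G : SimpleGraph V} {H : SimpleGraph W} (e : G ≃g H)
    {u v : V} (h : G.Reachable u v) : H.dist (e u) (e v) = G.dist u v := by
  refine le_antisymm ?_ ?_
  · obtain ⟨p, hp⟩ := h.exists_walk_length_eq_dist
    calc H.dist (e u) (e v) ≤ (p.map e.toHom).length := dist_le _
      _ = G.dist u v := by rw [Walk.length_map, hp]
  · obtain ⟨q, hq⟩ := (h.map e.toHom).exists_walk_length_eq_dist
    have h2 : G.dist (e.symm (e u)) (e.symm (e v)) ≤ (q.map e.symm.toHom).length := dist_le _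
    rw [Walk.length_map, hq] at h2
    simpa using h2

local notation "K13" => completeBipartiteGraph (Fin 1) (Fin 3)

lemma K13_conn : (K13).Connected := by
  have reach0 : ∀ s : Fin 1 ⊕ Fin 3, (K13).Reachable s (Sum.inl 0) := by
    rintro (i | j)
    · rw [Subsingleton.elim i 0]
    · exact SimpleGraph.Adj.reachable (by simp)
  rw [connected_iff]
  exact ⟨fun s t => (reach0 s).trans (reach0 t).symm, ⟨Sum.inl 0⟩⟩

lemma K13_dist_center (j : Fin 3) : (K13).dist (Sum.inl 0) (Sum.inr j) = 1 :=
  adj_dist (by simp)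

lemma K13_dist_leaves {i j : Fin 3} (hij : i ≠ j) :
    (K13).dist (Sum.inr i) (Sum.inr j) = 2 := by
  have hle : (K13).dist (Sum.inr i) (Sum.inr j) ≤ 2 := by
    have := K13_conn.dist_triangle (u := Sum.inr i) (v := Sum.inl 0) (w := Sum.inr j)
    have h1 : (K13).dist (Sum.inr i) (Sum.inl 0) = 1 := adj_dist (by simp)
    rw [h1, K13_dist_center] at this
    omega
  have hne : (Sum.inr i : Fin 1 ⊕ Fin 3) ≠ Sum.inr j := by simp [hij]
  have hpos : 0 < (K13).dist (Sum.inr i) (Sum.inr j) := K13_conn.pos_dist_of_ne hne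
  have hne1 : (K13).dist (Sum.inr i) (Sum.inr j) ≠ 1 := by
    intro h
    have := dist_eq_one_iff_adj.mp h
    simp at this
  omega

lemma K13_prop (s t : Fin 1 ⊕ Fin 3) (hst : (K13).Adj s t) :
    ({(closerSet K13 s t).ncard, (closerSet K13 t s).ncard} : Set ℕ) = {1, 3} := by
  have main : ∀ j : Fin 3,
      (closerSet K13 (Sum.inl 0) (Sum.inr j)).ncard = 3 ∧
      (closerSet K13 (Sum.inr j) (Sum.inl 0)).ncard = 1 := by
    intro j
    have h1 : closerSet K13 (Sum.inr j) (Sum.inl 0) = {Sum.inr j} := by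
      ext x
      rcases x with i | i
      · rw [Subsingleton.elim i 0]
        simp only [mem_closerSet, Set.mem_singleton_iff]
        rw [K13_dist_center j, SimpleGraph.dist_self]
        simp
      · by_cases hij : i = j
        · subst hij
          simp only [mem_closerSet, Set.mem_singleton_iff]
          rw [SimpleGraph.dist_self]
          have : (K13).dist (Sum.inr i) (Sum.inl 0) = 1 := adj_dist (by simp)
          simp [this]
        · simp only [mem_closerSet, Set.mem_singleton_iff]
          rw [K13_dist_leaves hij]
          have : (K13).dist (Sum.inr i) (Sum.inl 0) = 1 := adj_dist (by simp)
          simp [this, hij]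
    have h2 : closerSet K13 (Sum.inl 0) (Sum.inr j) = ({Sum.inr j} : Set (Fin 1 ⊕ Fin 3))ᶜ := by
      ext x
      rcases x with i | i
      · rw [Subsingleton.elim i 0]
        simp only [mem_closerSet, Set.mem_compl_iff, Set.mem_singleton_iff]
        rw [K13_dist_center j, SimpleGraph.dist_self]
        simp
      · by_cases hij : i = j
        · subst hij
          simp only [mem_closerSet, Set.mem_compl_iff, Set.mem_singleton_iff]
          rw [SimpleGraph.dist_self]
          have : (K13).dist (Sum.inr i) (Sum.inl 0) = 1 := adj_dist (by simp)
          simp [this]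
        · simp only [mem_closerSet, Set.mem_compl_iff, Set.mem_singleton_iff]
          rw [K13_dist_leaves hij]
          have : (K13).dist (Sum.inr i) (Sum.inl 0) = 1 := adj_dist (by simp)
          simp [this, hij]
    constructor
    · rw [h2]
      have hsum := Set.ncard_add_ncard_compl ({Sum.inr j} : Set (Fin 1 ⊕ Fin 3))
      rw [Set.ncard_singleton] at hsum
      have hcard : Nat.card (Fin 1 ⊕ Fin 3) = 4 := by
        rw [Nat.card_eq_fintype_card]; simp
      omega
    · rw [h1, Set.ncard_singleton]
  rcases s with i | i <;> rcases t with i' | i'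
  · simp at hst
  · rw [Subsingleton.elim i 0]
    rw [(main i').1, (main i').2, Set.pair_comm]
  · rw [Subsingleton.elim i' 0]
    rw [(main i).1, (main i).2, Set.pair_comm]
  · simp at hst

lemma reverse_dir {V : Type*} [Fintype V] {G : SimpleGraph V} (hc : G.Connected)
    (e : G ≃g K13) {a b : V} (hab : G.Adj a b) :
    ({(closerSet G a b).ncard, (closerSet G b a).ncard} : Set ℕ) = {1, 3} := by
  have himg : ∀ x y : V, G.Adj x y → closerSet K13 (e x) (e y) = e '' closerSet G x y := by
    intro x y _
    ext s
    obtain ⟨w, rfl⟩ := e.toEquiv.surjective s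
    simp only [Set.mem_image, mem_closerSet, RelIso.coe_fn_toEquiv]
    constructor
    · intro h
      refine ⟨w, ?_, rfl⟩
      rw [iso_dist e (hc.preconnected w x), iso_dist e (hc.preconnected w y)] at h
      exact h
    · rintro ⟨w', hw', hww⟩
      have hww2 : w' = w := e.toEquiv.injective (by simpa using hww)
      subst hww2
      rw [iso_dist e (hc.preconnected w' x), iso_dist e (hc.preconnected w' y)]
      exact hw'
  have hn1 : (closerSet K13 (e a) (e b)).ncard = (closerSet G a b).ncard := by
    rw [himg a b hab]
    exact Set.ncard_image_of_injective _ e.toEquiv.injective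
  have hn2 : (closerSet K13 (e b) (e a)).ncard = (closerSet G b a).ncard := by
    rw [himg b a hab.symm]
    exact Set.ncard_image_of_injective _ e.toEquiv.injective
  rw [← hn1, ← hn2]
  exact K13_prop (e a) (e b) (e.map_rel_iff.mpr hab)

end Transfer

end StmtAux

/-- A finite connected graph with at least one edge is 3-GNDB with parameter `γ = 1`
if and only if it is isomorphic to `K_{1,3}`. -/
theorem stmt_5 {V : Type*} [Fintype V] (G : SimpleGraph V) (hconn : G.Connected)
    (hedge : ∃ a b : V, G.Adj a b) :
    (∀ a b : V, G.Adj a b →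
        ({(closerSet G a b).ncard, (closerSet G b a).ncard} : Set ℕ) = {1, 3}) ↔
      Nonempty (G ≃g completeBipartiteGraph (Fin 1) (Fin 3)) := by
  constructor
  · intro hG
    obtain ⟨a, b, u, v, hpw, hba, hbu, hbv, cover, hBA, hBU, hBV, nAU, nAV, nUV⟩ :=
      StmtAux.star_structure hconn hG hedge
    exact StmtAux.star_iso hpw hba hbu hbv cover hBA hBU hBV nAU nAV nUV
  · rintro ⟨e⟩
    intro a b hab
    exact StmtAux.reverse_dir hconn e hab
end
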